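/- arXiv:2312.15623 — 2 statements merged into one kernel-verified Lean document; each statement's English description precedes it below -/
import Mathlib

section
/- Fix E > 0 and σ² > 0, and let N be a zero-mean real random variable with probability density, variance σ², and finite differential entropy. Define the capacity of the additive-noise channel with noise N under input variance constraint E as C = sup I(X ; X + N), the supremum running over all real random variables X with a probability density, independent of N, with Var(X) ≤ E. Then C ≥ ½·log(1 + E/σ²); that is, the capacity of the non-Gaussian additive-noise channel is at least the capacity of the Gaussian-equivalent channel whose noise is N(0, σ²). -/
/-!
Take the Gaussian input `X ∼ N(0, E)` and feed the information density of the Gaussian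
channel, `i(x, y) = log φ_{σ²}(y - x) - log φ_{E+σ²}(y)`, into the Donsker–Varadhan inequality
`D(J ‖ R) ≥ ∫ i dJ - log ∫ exp i dR`, where `J` is the law of `(X, X + N)` and
`R = P_X ⊗ P_{X+N}`. Since `φ_E ∗ φ_{σ²} = φ_{E+σ²}`, `exp i` integrates to `1` against
`P_X ⊗ P_Y` whatever the law `P_Y`, and `∫ i dJ` depends on `N` only through `E[N²] = σ²` and
`E[(X + N)²] = E + σ²`, which gives exactly `½ log (1 + E/σ²)`.
-/

open MeasureTheory ProbabilityTheory Real
open scoped NNReal ENNReal Classical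

noncomputable section

/-- Kullback–Leibler divergence `D(P ‖ Q) = ∫ log (dP/dQ) dP` when `P ≪ Q` and the
integral is well defined; `∞` otherwise. -/
def klDiv {α : Type*} [MeasurableSpace α] (P Q : Measure α) : EReal :=
  if P ≪ Q ∧ Integrable (fun x => Real.log (P.rnDeriv Q x).toReal) P
  then ((∫ x, Real.log (P.rnDeriv Q x).toReal ∂P : ℝ) : EReal)
  else ⊤

/-- Mutual information `I(X ; Y) = D(P_(X,Y) ‖ P_X ⊗ P_Y)`. -/
def mutualInfo {Ω : Type*} [MeasurableSpace Ω] (μ : Measure Ω) (X Y : Ω → ℝ) : EReal :=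
  klDiv (μ.map (fun ω => (X ω, Y ω))) ((μ.map X).prod (μ.map Y))

/-- Differential entropy `h(P) = -∫ f log f` where `f = dP/dx`. -/
def diffEntropy (P : Measure ℝ) : ℝ :=
  -∫ x, (P.rnDeriv volume x).toReal * Real.log (P.rnDeriv volume x).toReal

/-- `P` has a density and a well-defined, finite differential entropy. -/
def HasFiniteDiffEntropy (P : Measure ℝ) : Prop :=
  P ≪ volume ∧
    Integrable (fun x => (P.rnDeriv volume x).toReal * Real.log (P.rnDeriv volume x).toReal)

/-- The mutual information `I(X ; X + N)` of the additive-noise channel with input law `P`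
and noise law `Q`, input and noise being independent (canonical product-space model). -/
def rate (P Q : Measure ℝ) : EReal :=
  mutualInfo (P.prod Q) (fun p => p.1) (fun p => p.1 + p.2)

theorem integral_sub_log_integral_exp_le_klDiv {α : Type*} [MeasurableSpace α]
    {μ ν : Measure α} [IsProbabilityMeasure μ] [SigmaFinite ν] {f : α → ℝ}
    (hfμ : Integrable f μ) (hfν : Integrable (fun x ↦ exp (f x)) ν) :
    ((∫ x, f x ∂μ - log (∫ x, exp (f x) ∂ν) : ℝ) : EReal) ≤ klDiv μ ν := by
  unfold klDiv
  split_ifs with h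
  · obtain ⟨hμν, hllr⟩ := h
    have : NeZero ν := ⟨fun hν ↦ IsProbabilityMeasure.ne_zero μ
      (Measure.absolutelyContinuous_zero_iff.mp (hν ▸ hμν))⟩
    have := isProbabilityMeasure_tilted hfν
    -- Gibbs' inequality for `μ` against the tilted probability measure `e^f ν / ∫ e^f dν`.
    have hgibbs := InformationTheory.integral_llr_add_sub_measure_univ_nonneg
      (hμν.trans (absolutelyContinuous_tilted hfν))
      (integrable_llr_tilted_right hμν hfμ hllr hfν)
    rw [integral_llr_tilted_right hμν hfμ hfν hllr] at hgibbs
    simp only [probReal_univ, add_sub_cancel_right] at hgibbs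
    exact EReal.coe_le_coe_iff.mpr (by rw [llr_def] at hgibbs; linarith)
  · exact le_top

theorem log_gaussianPDFReal (m : ℝ) {v : ℝ≥0} (hv : v ≠ 0) (x : ℝ) :
    log (gaussianPDFReal m v x) = -(log (2 * π * v) + (x - m) ^ 2 / v) / 2 := by
  have : (0 : ℝ) < 2 * π * v := by positivity
  rw [gaussianPDFReal, log_mul (by positivity) (exp_pos _).ne', log_inv, log_exp,
    log_sqrt this.le]
  field_simp
  ring

-- Bayes' rule for the Gaussian channel: prior × likelihood = output density × posterior density.
theorem gaussianPDFReal_mul_gaussianPDFReal_sub {v w : ℝ≥0} (hv : v ≠ 0) (hw : w ≠ 0)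
    (x y : ℝ) :
    gaussianPDFReal 0 v x * gaussianPDFReal 0 w (y - x)
      = gaussianPDFReal 0 (v + w) y * gaussianPDFReal (v * y / (v + w)) (v * w / (v + w)) x := by
  have hv' : (0 : ℝ) < v := by positivity
  have hw' : (0 : ℝ) < w := by positivity
  simp only [gaussianPDFReal, NNReal.coe_add, NNReal.coe_div, NNReal.coe_mul]
  rw [mul_mul_mul_comm, mul_mul_mul_comm _ (rexp _), ← mul_inv, ← mul_inv,
    ← sqrt_mul (by positivity), ← sqrt_mul (by positivity), ← exp_add, ← exp_add]
  congr 1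
  · congr 2
    field_simp
  · congr 1
    field_simp
    ring

theorem lintegral_gaussianPDFReal_sub {v w : ℝ≥0} (hv : v ≠ 0) (hw : w ≠ 0) (y : ℝ) :
    ∫⁻ x, ENNReal.ofReal (gaussianPDFReal 0 w (y - x)) ∂gaussianReal 0 v
      = ENNReal.ofReal (gaussianPDFReal 0 (v + w) y) := by
  rw [gaussianReal_of_var_ne_zero _ hv,
    lintegral_withDensity_eq_lintegral_mul _ (measurable_gaussianPDF _ _) (by fun_prop)]
  simp_rw [Pi.mul_apply, gaussianPDF, ← ENNReal.ofReal_mul (gaussianPDFReal_nonneg _ _ _),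
    gaussianPDFReal_mul_gaussianPDFReal_sub hv hw,
    ENNReal.ofReal_mul (gaussianPDFReal_nonneg _ _ _)]
  rw [lintegral_const_mul _ (by fun_prop), ← gaussianPDF_def,
    lintegral_gaussianPDF_eq_one _ (by positivity), mul_one]

section CrossEntropy

variable {Ω : Type*} [MeasurableSpace Ω] {ρ : Measure Ω} {v : ℝ≥0} {g : Ω → ℝ}

theorem integrable_log_gaussianPDFReal_comp [IsFiniteMeasure ρ] (hv : v ≠ 0)
    (hg : MemLp g 2 ρ) : Integrable (fun ω ↦ log (gaussianPDFReal 0 v (g ω))) ρ := by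
  simp_rw [log_gaussianPDFReal 0 hv, sub_zero]
  exact ((integrable_const _).add (hg.integrable_sq.div_const _)).neg.div_const _

theorem integral_log_gaussianPDFReal_comp [IsProbabilityMeasure ρ] (hv : v ≠ 0)
    (hg : MemLp g 2 ρ) :
    ∫ ω, log (gaussianPDFReal 0 v (g ω)) ∂ρ
      = -(log (2 * π * v) + (∫ ω, g ω ^ 2 ∂ρ) / v) / 2 := by
  simp_rw [log_gaussianPDFReal 0 hv, sub_zero]
  rw [integral_div, integral_neg,
    integral_add (integrable_const _) (hg.integrable_sq.div_const _), integral_div]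
  simp

end CrossEntropy

theorem integral_sq_gaussianReal (v : ℝ≥0) : ∫ x, x ^ 2 ∂gaussianReal 0 v = v := by
  rw [← variance_of_integral_eq_zero aemeasurable_id' integral_id_gaussianReal,
    variance_fun_id_gaussianReal]

theorem memLp_fst_add_snd {P Q : Measure ℝ} [IsFiniteMeasure P] [IsFiniteMeasure Q]
    (hP : MemLp (fun x ↦ x) 2 P) (hQ : MemLp (fun x ↦ x) 2 Q) :
    MemLp (fun z : ℝ × ℝ ↦ z.1 + z.2) 2 (P.prod Q) :=
  (hP.comp_fst Q).add (hQ.comp_snd P)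

theorem integral_fst_add_snd_sq {P Q : Measure ℝ}
    [IsProbabilityMeasure P] [IsProbabilityMeasure Q]
    (hP : MemLp (fun x ↦ x) 2 P) (hQ : MemLp (fun x ↦ x) 2 Q) (hP0 : ∫ x, x ∂P = 0) :
    ∫ z, (z.1 + z.2) ^ 2 ∂P.prod Q = ∫ x, x ^ 2 ∂P + ∫ x, x ^ 2 ∂Q := by
  have hP2 := (hP.comp_fst Q).integrable_sq
  have hQ2 := (hQ.comp_snd P).integrable_sq
  have hPQ : Integrable (fun z : ℝ × ℝ ↦ z.1 * z.2) (P.prod Q) :=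
    (hP.integrable one_le_two).mul_prod (hQ.integrable one_le_two)
  simp_rw [add_sq, mul_assoc]
  rw [integral_add (by exact hP2.add (hPQ.const_mul 2)) hQ2,
    integral_add hP2 (hPQ.const_mul 2),
    integral_const_mul, integral_prod_mul (fun x ↦ x) (fun x ↦ x), hP0,
    integral_fun_fst (fun x ↦ x ^ 2), integral_fun_snd (fun x ↦ x ^ 2)]
  simp

def inputOutputLaw (P Q : Measure ℝ) : Measure (ℝ × ℝ) :=
  (P.prod Q).map fun z ↦ (z.1, z.1 + z.2)

instance (P Q : Measure ℝ) [IsProbabilityMeasure P] [IsProbabilityMeasure Q] :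
    IsProbabilityMeasure (inputOutputLaw P Q) :=
  Measure.isProbabilityMeasure_map (by fun_prop)

theorem rate_eq_klDiv (P Q : Measure ℝ) [IsProbabilityMeasure Q] :
    rate P Q = klDiv (inputOutputLaw P Q) (P.prod (P ∗ Q)) := by
  rw [rate, mutualInfo, Measure.map_fst_prod, measure_univ, one_smul]
  -- `P ∗ Q` is by definition the law of `X + N` under `P.prod Q`.
  rfl

def gaussianInformationDensity (E σ2 : ℝ≥0) (z : ℝ × ℝ) : ℝ :=
  log (gaussianPDFReal 0 σ2 (z.2 - z.1)) - log (gaussianPDFReal 0 (E + σ2) z.2)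

@[fun_prop]
theorem measurable_gaussianInformationDensity (E σ2 : ℝ≥0) :
    Measurable (gaussianInformationDensity E σ2) := by
  unfold gaussianInformationDensity
  fun_prop

section InformationDensity

variable {E σ2 : ℝ≥0}

theorem lintegral_exp_gaussianInformationDensity (hE : E ≠ 0) (hσ2 : σ2 ≠ 0)
    (R : Measure ℝ) [IsProbabilityMeasure R] :
    ∫⁻ z, ENNReal.ofReal (exp (gaussianInformationDensity E σ2 z)) ∂(gaussianReal 0 E).prod R
      = 1 := by
  have hpos (v : ℝ≥0) (hv : v ≠ 0) (x : ℝ) := gaussianPDFReal_pos 0 v x hv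
  have hexp (z : ℝ × ℝ) : ENNReal.ofReal (exp (gaussianInformationDensity E σ2 z))
      = ENNReal.ofReal (gaussianPDFReal 0 σ2 (z.2 - z.1))
        / ENNReal.ofReal (gaussianPDFReal 0 (E + σ2) z.2) := by
    rw [gaussianInformationDensity, exp_sub, exp_log (hpos _ hσ2 _),
      exp_log (hpos _ (by positivity) _), ENNReal.ofReal_div_of_pos (hpos _ (by positivity) _)]
  simp_rw [hexp]
  rw [lintegral_prod_symm _ (by fun_prop)]
  have hinner (y : ℝ) : ∫⁻ x, ENNReal.ofReal (gaussianPDFReal 0 σ2 (y - x))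
      * (ENNReal.ofReal (gaussianPDFReal 0 (E + σ2) y))⁻¹ ∂gaussianReal 0 E = 1 := by
    rw [lintegral_mul_const _ (by fun_prop), lintegral_gaussianPDFReal_sub hE hσ2,
      ENNReal.mul_inv_cancel (by simpa using hpos _ (by positivity) y) ENNReal.ofReal_ne_top]
  simp_rw [div_eq_mul_inv, hinner, lintegral_const, measure_univ, mul_one]

theorem integrable_exp_gaussianInformationDensity (hE : E ≠ 0) (hσ2 : σ2 ≠ 0)
    (R : Measure ℝ) [IsProbabilityMeasure R] :
    Integrable (fun z ↦ exp (gaussianInformationDensity E σ2 z)) ((gaussianReal 0 E).prod R) :=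
  ⟨by fun_prop, (hasFiniteIntegral_iff_ofReal (ae_of_all _ fun _ ↦ (exp_pos _).le)).mpr
    (by simp [lintegral_exp_gaussianInformationDensity hE hσ2 R])⟩

theorem integral_exp_gaussianInformationDensity (hE : E ≠ 0) (hσ2 : σ2 ≠ 0)
    (R : Measure ℝ) [IsProbabilityMeasure R] :
    ∫ z, exp (gaussianInformationDensity E σ2 z) ∂(gaussianReal 0 E).prod R = 1 := by
  rw [integral_eq_lintegral_of_nonneg_ae (ae_of_all _ fun _ ↦ (exp_pos _).le) (by fun_prop),
    lintegral_exp_gaussianInformationDensity hE hσ2 R, ENNReal.toReal_one]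

variable {Q : Measure ℝ} [IsProbabilityMeasure Q]

theorem integrable_gaussianInformationDensity_inputOutputLaw (hE : E ≠ 0) (hσ2 : σ2 ≠ 0)
    (hQ : MemLp (fun x ↦ x) 2 Q) :
    Integrable (gaussianInformationDensity E σ2) (inputOutputLaw (gaussianReal 0 E) Q) := by
  rw [inputOutputLaw, integrable_map_measure (by fun_prop) (by fun_prop)]
  simp only [Function.comp_def, gaussianInformationDensity, add_sub_cancel_left]
  exact (integrable_log_gaussianPDFReal_comp hσ2 (hQ.comp_snd _)).sub
    (integrable_log_gaussianPDFReal_comp (v := E + σ2) (by positivity)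
      (memLp_fst_add_snd (memLp_id_gaussianReal 2) hQ))

theorem integral_gaussianInformationDensity_inputOutputLaw (hE : E ≠ 0) (hσ2 : σ2 ≠ 0)
    (hQ : MemLp (fun x ↦ x) 2 Q) (hQ2 : ∫ x, x ^ 2 ∂Q = σ2) :
    ∫ z, gaussianInformationDensity E σ2 z ∂inputOutputLaw (gaussianReal 0 E) Q
      = log (1 + E / σ2) / 2 := by
  have hY := memLp_fst_add_snd (memLp_id_gaussianReal 2) hQ (P := gaussianReal 0 E)
  rw [inputOutputLaw, integral_map (by fun_prop) (by fun_prop)]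
  simp only [gaussianInformationDensity, add_sub_cancel_left]
  rw [integral_sub (integrable_log_gaussianPDFReal_comp hσ2 (hQ.comp_snd _))
      (integrable_log_gaussianPDFReal_comp (v := E + σ2) (by positivity) hY),
    integral_log_gaussianPDFReal_comp hσ2 (hQ.comp_snd _),
    integral_log_gaussianPDFReal_comp (by positivity) hY,
    integral_fun_snd (fun x ↦ x ^ 2), integral_fst_add_snd_sq (memLp_id_gaussianReal 2) hQ
      integral_id_gaussianReal, integral_sq_gaussianReal, hQ2]
  have hE' : (0 : ℝ) < E := by positivity
  have hσ2' : (0 : ℝ) < σ2 := by positivity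
  have hlog : log (2 * π * (E + σ2 : ℝ≥0)) - log (2 * π * σ2) = log (1 + E / σ2) := by
    rw [← log_div (by positivity) (by positivity)]
    congr 1
    push_cast
    field_simp
    ring
  simp only [probReal_univ, one_smul, NNReal.coe_add] at hlog ⊢
  rw [div_self hσ2'.ne', div_self (by positivity), ← hlog]
  ring

end InformationDensity

theorem stmt_6_general (E σ2 : ℝ≥0) (hE : 0 < E) (hσ2 : 0 < σ2)
    (Q : Measure ℝ) [IsProbabilityMeasure Q]
    (hQmean : ∫ x, x ∂Q = 0)
    (hQL2 : MemLp (fun x => x) 2 Q) (hQvar : variance (fun x => x) Q = (σ2 : ℝ)) :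
    ((Real.log (1 + (E : ℝ) / (σ2 : ℝ)) / 2 : ℝ) : EReal)
      ≤ sSup {r : EReal | ∃ P : Measure ℝ, IsProbabilityMeasure P ∧ P ≪ volume ∧
          MemLp (fun x => x) 2 P ∧ variance (fun x => x) P ≤ (E : ℝ) ∧
          r = rate P Q} := by
  have hQ2 : ∫ x, x ^ 2 ∂Q = σ2 := by
    rw [← variance_of_integral_eq_zero aemeasurable_id' hQmean, hQvar]
  refine le_sSup_of_le ⟨gaussianReal 0 E, inferInstance,
    gaussianReal_absolutelyContinuous 0 hE.ne', memLp_id_gaussianReal 2,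
    variance_fun_id_gaussianReal.le, rfl⟩ ?_
  have h := integral_sub_log_integral_exp_le_klDiv
    (integrable_gaussianInformationDensity_inputOutputLaw hE.ne' hσ2.ne' hQL2)
    (integrable_exp_gaussianInformationDensity hE.ne' hσ2.ne' (gaussianReal 0 E ∗ Q))
  rwa [integral_gaussianInformationDensity_inputOutputLaw hE.ne' hσ2.ne' hQL2 hQ2,
    integral_exp_gaussianInformationDensity hE.ne' hσ2.ne', log_one, sub_zero,
    ← rate_eq_klDiv] at h

/-- The capacity of the additive-noise channel with zero-mean noise of
variance `σ2`, density and finite differential entropy, under input variance constraint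
`E`, is at least the Gaussian-equivalent capacity `½ log (1 + E/σ²)`. -/
theorem stmt_6 (E σ2 : ℝ≥0) (hE : 0 < E) (hσ2 : 0 < σ2)
    (Q : Measure ℝ) [IsProbabilityMeasure Q] (hQac : Q ≪ volume)
    (hQint : Integrable (fun x => x) Q) (hQmean : ∫ x, x ∂Q = 0)
    (hQL2 : MemLp (fun x => x) 2 Q) (hQvar : variance (fun x => x) Q = (σ2 : ℝ))
    (hQent : HasFiniteDiffEntropy Q) :
    ((Real.log (1 + (E : ℝ) / (σ2 : ℝ)) / 2 : ℝ) : EReal)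
      ≤ sSup {r : EReal | ∃ P : Measure ℝ, IsProbabilityMeasure P ∧ P ≪ volume ∧
          MemLp (fun x => x) 2 P ∧ variance (fun x => x) P ≤ (E : ℝ) ∧
          r = rate P Q} :=
  stmt_6_general E σ2 hE hσ2 Q hQmean hQL2 hQvar
end
end

section
/- Fix E > 0 and σ² > 0. Let N be a zero-mean real random variable with probability density, variance σ², and finite differential entropy, and let N_G ∼ N(0, σ²). Define the capacity of the additive-noise channel with noise N under input variance constraint E as C = sup I(X ; X + N), the supremum running over all real random variables X with a probability density, independent of N, with Var(X) ≤ E. Then C ≤ ½·log(1 + E/σ²) + D(P_N ‖ P_{N_G}); that is, the capacity of the non-Gaussian channel exceeds the Gaussian-equivalent capacity by at most the non-Gaussianity of the noise. -/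
open MeasureTheory ProbabilityTheory Real
open scoped NNReal ENNReal Classical

noncomputable section

/-!
For any law `R` of the output, `I(X ; X + N) = D(P_{X,Y} ‖ P_X ⊗ P_Y) ≤ D(P_{X,Y} ‖ P_X ⊗ R)`:
disintegrating along the output, the chain rule shows that the difference is `D(P_Y ‖ R) ≥ 0`.
Take `R = N(m, E + σ²)` with `m` the mean of `X`. The joint law of `(X, X + N)` has density
`n(y - x)` with respect to `P_X ⊗ Lebesgue`, so its log-likelihood ratio against `P_X ⊗ R` is
`log n(N) - log r(X + N)`, and `log n = log (dP_N/dN_G) + log φ_σ` almost surely. Gaussian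
log-densities are quadratic, so their expectations only see second moments:
`𝔼 log φ_σ(N) = -½ - ½ log (2πσ²)` and `𝔼 log r(X + N) ≥ -½ - ½ log (2π(E + σ²))`, which leaves
at most `D(P_N ‖ N_G) + ½ log (1 + E/σ²)`.
-/
theorem klDiv_eq_coe_klDiv {α : Type*} [MeasurableSpace α] (P Q : Measure α)
    [IsProbabilityMeasure P] [IsProbabilityMeasure Q] :
    klDiv P Q = (InformationTheory.klDiv P Q : EReal) := by
  by_cases h : P ≪ Q ∧ Integrable (llr P Q) P
  · have hnonneg := InformationTheory.integral_llr_add_sub_measure_univ_nonneg h.1 h.2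
    simp only [probReal_univ, add_sub_cancel_right] at hnonneg
    rw [klDiv, ← llr_def, if_pos h, InformationTheory.klDiv_of_ac_of_integrable h.1 h.2]
    simp [probReal_univ, EReal.coe_ennreal_ofReal, max_eq_left hnonneg]
  · rw [klDiv, ← llr_def, if_neg h,
      InformationTheory.klDiv_eq_top_iff.mpr fun hac hint => h ⟨hac, hint⟩]
    rfl

namespace InformationTheory

theorem klDiv_prod_snd_le {α β : Type*} [MeasurableSpace α] [MeasurableSpace β]
    [StandardBorelSpace α] [Nonempty α] (μ : Measure (α × β)) [IsFiniteMeasure μ]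
    (P : Measure α) [IsProbabilityMeasure P] (R : Measure β) [IsFiniteMeasure R] :
    klDiv μ (P.prod μ.snd) ≤ klDiv μ (P.prod R) := by
  set ρ := μ.map Prod.swap
  have hρ : ρ.map Prod.swap = μ := by
    simp [ρ, Measure.map_map measurable_swap measurable_swap]
  calc klDiv μ (P.prod μ.snd)
      = klDiv (ρ.map Prod.swap) ((μ.snd.prod P).map Prod.swap) := by
        rw [hρ, Measure.prod_swap]
    _ ≤ klDiv ρ (μ.snd.prod P) := klDiv_map_le _ _ measurable_swap
    _ = klDiv (ρ.fst ⊗ₘ ρ.condKernel) (ρ.fst ⊗ₘ Kernel.const β P) := by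
        rw [Measure.disintegrate, Measure.compProd_const, Measure.fst_map_swap]
    _ ≤ klDiv (ρ.fst ⊗ₘ ρ.condKernel) (R ⊗ₘ Kernel.const β P) := by
        rw [klDiv_compProd_eq_add ρ.fst R]
        exact le_add_self
    _ = klDiv (μ.map Prod.swap) ((P.prod R).map Prod.swap) := by
        rw [Measure.disintegrate, Measure.compProd_const, Measure.prod_swap]
    _ ≤ klDiv μ (P.prod R) := klDiv_map_le _ _ measurable_swap

end InformationTheory

namespace MeasureTheory

theorem llr_ae_eq_llr_add_llr {α : Type*} [MeasurableSpace α] {μ ν ξ : Measure α}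
    [SigmaFinite μ] [SigmaFinite ν] [SigmaFinite ξ] (hμν : μ ≪ ν) (hνξ : ν ≪ ξ) :
    llr μ ξ =ᵐ[μ] llr μ ν + llr ν ξ := by
  filter_upwards [(hμν.trans hνξ).ae_le (Measure.rnDeriv_mul_rnDeriv hμν),
    Measure.rnDeriv_pos hμν, hμν.ae_le (Measure.rnDeriv_lt_top μ ν),
    hμν.ae_le (Measure.rnDeriv_pos hνξ), (hμν.trans hνξ).ae_le (Measure.rnDeriv_lt_top ν ξ)]
    with x hmul h1 h2 h3 h4
  rw [llr, ← hmul, Pi.mul_apply, ENNReal.toReal_mul,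
    log_mul (ENNReal.toReal_pos h1.ne' h2.ne).ne' (ENNReal.toReal_pos h3.ne' h4.ne).ne']
  rfl

theorem llr_withDensity_withDensity {α : Type*} [MeasurableSpace α] {ξ : Measure α}
    [SigmaFinite ξ] {f g : α → ℝ≥0∞} (hf : Measurable f) (hg : Measurable g)
    (hf_top : ∀ᵐ x ∂ξ, f x ≠ ∞) (hg_zero : ∀ᵐ x ∂ξ, g x ≠ 0) (hg_top : ∀ᵐ x ∂ξ, g x ≠ ∞) :
    llr (ξ.withDensity f) (ξ.withDensity g)
      =ᵐ[ξ.withDensity f] fun x => log (f x).toReal - log (g x).toReal := by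
  have := SigmaFinite.withDensity_of_ne_top hf_top
  have hrn : (ξ.withDensity f).rnDeriv (ξ.withDensity g) =ᵐ[ξ] fun x => (g x)⁻¹ * f x := by
    filter_upwards [Measure.rnDeriv_withDensity_right (ξ.withDensity f) ξ hg.aemeasurable
      hg_zero hg_top, Measure.rnDeriv_withDensity ξ hf] with x h1 h2
    rw [h1, h2]
  have hf_zero : ∀ᵐ x ∂ξ.withDensity f, f x ≠ 0 := by
    rw [ae_withDensity_iff hf]
    exact ae_of_all _ fun x h h0 => h h0
  filter_upwards [(withDensity_absolutelyContinuous ξ f).ae_le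
      (hrn.and (hf_top.and (hg_zero.and hg_top))), hf_zero]
    with x ⟨h, hft, hg0, hgt⟩ hf0
  rw [llr, h, ENNReal.toReal_mul, ENNReal.toReal_inv,
    log_mul (inv_ne_zero (ENNReal.toReal_pos hg0 hgt).ne') (ENNReal.toReal_pos hf0 hft).ne',
    log_inv]
  ring

theorem MeasurePreserving.map_withDensity {α β : Type*} [MeasurableSpace α]
    [MeasurableSpace β] {ξ : Measure α} {ξ' : Measure β} {e : α ≃ᵐ β}
    (he : MeasurePreserving e ξ ξ') (f : α → ℝ≥0∞) :
    (ξ.withDensity f).map e = ξ'.withDensity (f ∘ e.symm) := by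
  ext s hs
  rw [Measure.map_apply e.measurable hs, withDensity_apply _ (e.measurable hs),
    withDensity_apply _ hs, ← he.setLIntegral_comp_preimage_emb e.measurableEmbedding]
  simp

theorem map_prodMk_add_eq_withDensity {G : Type*} [AddCommGroup G] [MeasurableSpace G]
    [MeasurableAdd₂ G] [MeasurableNeg G] (P Q ν : Measure G) [SFinite P] [SigmaFinite Q]
    [SigmaFinite ν] [ν.IsAddLeftInvariant] (hQ : Q ≪ ν) :
    (P.prod Q).map (fun p => (p.1, p.1 + p.2))
      = (P.prod ν).withDensity fun z => Q.rnDeriv ν (z.2 - z.1) := by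
  have hshear : MeasurePreserving (MeasurableEquiv.shearAddRight G) (P.prod ν) (P.prod ν) :=
    measurePreserving_prod_add P ν
  conv_lhs => rw [← Measure.withDensity_rnDeriv_eq Q ν hQ,
    prod_withDensity_right (Measure.measurable_rnDeriv Q ν)]
  rw [show (fun p : G × G => (p.1, p.1 + p.2)) = MeasurableEquiv.shearAddRight G from rfl,
    hshear.map_withDensity]
  congr 1 with z
  simp [MeasurableEquiv.shearAddRight, sub_eq_neg_add]

end MeasureTheory

namespace ProbabilityTheory

theorem log_gaussianPDFReal (m : ℝ) {v : ℝ≥0} (hv : v ≠ 0) (x : ℝ) :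
    log (gaussianPDFReal m v x) = -(x - m) ^ 2 / (2 * v) - log (2 * π * v) / 2 := by
  have hv' : (0 : ℝ) < v := by positivity
  rw [gaussianPDFReal, log_mul (by positivity) (exp_pos _).ne', log_inv, log_exp,
    log_sqrt (by positivity)]
  ring

section GaussianCrossEntropy

variable {Ω : Type*} [MeasurableSpace Ω] {μ : Measure Ω} {X : Ω → ℝ} {v : ℝ≥0}

theorem integrable_log_gaussianPDFReal [IsFiniteMeasure μ] (hX : MemLp X 2 μ) (m : ℝ)
    (hv : v ≠ 0) : Integrable (fun ω => log (gaussianPDFReal m v (X ω))) μ := by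
  simp_rw [log_gaussianPDFReal m hv]
  exact ((hX.sub (memLp_const m)).integrable_sq.neg.div_const _).sub (integrable_const _)

theorem integral_log_gaussianPDFReal [IsProbabilityMeasure μ] (hX : MemLp X 2 μ) {m : ℝ}
    (hm : μ[X] = m) (hv : v ≠ 0) :
    ∫ ω, log (gaussianPDFReal m v (X ω)) ∂μ = -Var[X; μ] / (2 * v) - log (2 * π * v) / 2 := by
  have hsq : Integrable (fun ω => -(X ω - m) ^ 2 / (2 * v)) μ :=
    (hX.sub (memLp_const m)).integrable_sq.neg.div_const _
  simp_rw [log_gaussianPDFReal m hv]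
  rw [integral_sub hsq (integrable_const _), integral_div, integral_neg,
    variance_eq_integral hX.aemeasurable, hm]
  simp

end GaussianCrossEntropy

theorem llr_volume_ae_eq_llr_gaussianReal_add {Q : Measure ℝ} [IsFiniteMeasure Q] {m : ℝ}
    {v : ℝ≥0} (hv : v ≠ 0) (hQ : Q ≪ gaussianReal m v) :
    llr Q volume =ᵐ[Q] fun x => llr Q (gaussianReal m v) x + log (gaussianPDFReal m v x) := by
  have hG := gaussianReal_absolutelyContinuous m hv
  filter_upwards [llr_ae_eq_llr_add_llr hQ hG, (hQ.trans hG).ae_le (rnDeriv_gaussianReal m v)]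
    with x h_chain h_density
  simp only [h_chain, Pi.add_apply, llr_def, h_density, toReal_gaussianPDF]

end ProbabilityTheory

def channelLaw (P Q : Measure ℝ) : Measure (ℝ × ℝ) :=
  (P.prod Q).map fun p => (p.1, p.1 + p.2)

theorem measurable_prodMk_add : Measurable fun p : ℝ × ℝ => (p.1, p.1 + p.2) := by fun_prop

section Channel

variable (P Q : Measure ℝ) [IsProbabilityMeasure P] [IsProbabilityMeasure Q]

instance : IsProbabilityMeasure (channelLaw P Q) :=
  Measure.isProbabilityMeasure_map measurable_prodMk_add.aemeasurable

theorem rate_eq_klDiv_s9 : rate P Q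
    = (InformationTheory.klDiv (channelLaw P Q) (P.prod (channelLaw P Q).snd) : EReal) := by
  have hfst : (P.prod Q).map (fun p => p.1) = P := by
    rw [← Measure.fst, Measure.fst_prod]
  have hsnd : (channelLaw P Q).snd = (P.prod Q).map fun p => p.1 + p.2 := by
    rw [channelLaw, Measure.snd, Measure.map_map measurable_snd measurable_prodMk_add]
    rfl
  rw [← klDiv_eq_coe_klDiv, hsnd, rate, mutualInfo, hfst]
  rfl

variable {P Q}

theorem channelLaw_eq_withDensity (hQ : Q ≪ volume) :
    channelLaw P Q = (P.prod volume).withDensity fun z => Q.rnDeriv volume (z.2 - z.1) :=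
  map_prodMk_add_eq_withDensity P Q volume hQ

theorem channelLaw_absolutelyContinuous_prod_withDensity (hQ : Q ≪ volume) {r : ℝ → ℝ≥0∞}
    (hr : Measurable r) (hr_zero : ∀ y, r y ≠ 0) :
    channelLaw P Q ≪ P.prod (volume.withDensity r) := by
  rw [channelLaw_eq_withDensity hQ, prod_withDensity_right hr]
  exact (withDensity_absolutelyContinuous _ _).trans
    (withDensity_absolutelyContinuous' (by fun_prop) (ae_of_all _ fun z => hr_zero z.2))

theorem llr_channelLaw_prod_withDensity_ae_eq (hQ : Q ≪ volume) {r : ℝ → ℝ≥0∞}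
    (hr : Measurable r) (hr_zero : ∀ y, r y ≠ 0) (hr_top : ∀ y, r y ≠ ∞) :
    (fun p => llr (channelLaw P Q) (P.prod (volume.withDensity r)) (p.1, p.1 + p.2))
      =ᵐ[P.prod Q] fun p => llr Q volume p.2 - log (r (p.1 + p.2)).toReal := by
  have hq : Measurable fun z : ℝ × ℝ => Q.rnDeriv volume (z.2 - z.1) := by fun_prop
  have hq_top : ∀ᵐ z ∂P.prod volume, Q.rnDeriv volume (z.2 - z.1) ≠ ∞ := by
    have h_one : ∫⁻ z, Q.rnDeriv volume (z.2 - z.1) ∂P.prod volume = 1 := by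
      rw [← setLIntegral_univ, ← withDensity_apply _ MeasurableSet.univ,
        ← channelLaw_eq_withDensity hQ, measure_univ]
    exact (ae_lt_top hq (h_one ▸ ENNReal.one_ne_top)).mono fun z hz => hz.ne
  have h := llr_withDensity_withDensity hq (by fun_prop : Measurable fun z : ℝ × ℝ => r z.2)
    hq_top (ae_of_all _ fun z => hr_zero z.2) (ae_of_all _ fun z => hr_top z.2)
  rw [← prod_withDensity_right hr, ← channelLaw_eq_withDensity hQ] at h
  filter_upwards [ae_of_ae_map measurable_prodMk_add.aemeasurable h] with p hp
  simpa [llr] using hp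

theorem llr_channelLaw_prod_gaussianReal_ae_eq {a m : ℝ} {σ2 τ : ℝ≥0} (hσ2 : σ2 ≠ 0)
    (hτ : τ ≠ 0) (hQ : Q ≪ gaussianReal a σ2) :
    (fun p => llr (channelLaw P Q) (P.prod (gaussianReal m τ)) (p.1, p.1 + p.2))
      =ᵐ[P.prod Q] fun p => llr Q (gaussianReal a σ2) p.2 + log (gaussianPDFReal a σ2 p.2)
        - log (gaussianPDFReal m τ (p.1 + p.2)) := by
  have h_channel := llr_channelLaw_prod_withDensity_ae_eq (P := P)
    (hQ.trans (gaussianReal_absolutelyContinuous a hσ2)) (measurable_gaussianPDF m τ)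
    (fun x => (gaussianPDF_pos m hτ x).ne') (fun _ => ENNReal.ofReal_ne_top)
  have h_noise := measurePreserving_snd.quasiMeasurePreserving.ae
    (μa := P.prod Q) (llr_volume_ae_eq_llr_gaussianReal_add hσ2 hQ)
  rw [← gaussianReal_of_var_ne_zero m hτ] at h_channel
  filter_upwards [h_channel, h_noise] with p hp_channel hp_noise
  rw [hp_channel, hp_noise, toReal_gaussianPDF]

theorem integrable_log_gaussianPDFReal_add (m : ℝ) {τ : ℝ≥0} (hτ : τ ≠ 0)
    (hP : MemLp (fun x => x) 2 P) (hQ : MemLp (fun x => x) 2 Q) :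
    Integrable (fun p : ℝ × ℝ => log (gaussianPDFReal m τ (p.1 + p.2))) (P.prod Q) :=
  integrable_log_gaussianPDFReal ((hP.comp_fst Q).add (hQ.comp_snd P)) m hτ

theorem integral_log_gaussianPDFReal_add {m : ℝ} {τ : ℝ≥0} (hτ : τ ≠ 0)
    (hP : MemLp (fun x => x) 2 P) (hQ : MemLp (fun x => x) 2 Q)
    (hm : ∫ x, x ∂P + ∫ x, x ∂Q = m) :
    ∫ p, log (gaussianPDFReal m τ (p.1 + p.2)) ∂P.prod Q
      = -(Var[fun x => x; P] + Var[fun x => x; Q]) / (2 * τ) - log (2 * π * τ) / 2 := by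
  have hsum : MemLp (fun p : ℝ × ℝ => p.1 + p.2) 2 (P.prod Q) :=
    (hP.comp_fst Q).add (hQ.comp_snd P)
  have hsum_mean : ∫ p : ℝ × ℝ, p.1 + p.2 ∂P.prod Q = m := by
    rw [integral_add ((hP.integrable one_le_two).comp_fst Q)
      ((hQ.integrable one_le_two).comp_snd P), integral_fun_fst (fun x => x),
      integral_fun_snd (fun x => x), ← hm]
    simp
  rw [integral_log_gaussianPDFReal hsum hsum_mean hτ,
    variance_add_prod hP hQ]

theorem klDiv_channelLaw_prod_gaussianReal {σ2 τ : ℝ≥0} (hσ2 : σ2 ≠ 0) (hτ : τ ≠ 0)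
    (hP : MemLp (fun x => x) 2 P) (hQ : MemLp (fun x => x) 2 Q) (hQmean : ∫ x, x ∂Q = 0)
    (hQvar : Var[fun x => x; Q] = σ2) (hQG : Q ≪ gaussianReal 0 σ2)
    (hQint : Integrable (llr Q (gaussianReal 0 σ2)) Q) :
    InformationTheory.klDiv (channelLaw P Q) (P.prod (gaussianReal (∫ x, x ∂P) τ))
      = ENNReal.ofReal (∫ x, llr Q (gaussianReal 0 σ2) x ∂Q
        + (-σ2 / (2 * σ2) - log (2 * π * σ2) / 2)
        - (-(Var[fun x => x; P] + σ2) / (2 * τ) - log (2 * π * τ) / 2)) := by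
  set m := ∫ x, x ∂P
  have hllr := llr_channelLaw_prod_gaussianReal_ae_eq (P := P) (m := m) hσ2 hτ hQG
  have h_noise_int : Integrable
      (fun x => llr Q (gaussianReal 0 σ2) x + log (gaussianPDFReal 0 σ2 x)) Q :=
    hQint.add (integrable_log_gaussianPDFReal hQ 0 hσ2)
  have h_out_int := integrable_log_gaussianPDFReal_add m hτ hP hQ
  have hac : channelLaw P Q ≪ P.prod (gaussianReal m τ) := gaussianReal_of_var_ne_zero m hτ ▸
    channelLaw_absolutelyContinuous_prod_withDensity
      (hQG.trans (gaussianReal_absolutelyContinuous 0 hσ2)) (measurable_gaussianPDF m τ)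
      (fun x => (gaussianPDF_pos m hτ x).ne')
  have hint : Integrable (llr (channelLaw P Q) (P.prod (gaussianReal m τ))) (channelLaw P Q) :=
    (integrable_map_measure (measurable_llr _ _).aestronglyMeasurable
      measurable_prodMk_add.aemeasurable).mpr
      (((h_noise_int.comp_snd P).sub h_out_int).congr hllr.symm)
  rw [InformationTheory.klDiv_of_ac_of_integrable hac hint]
  simp only [probReal_univ, add_sub_cancel_right]
  congr 1
  refine (integral_map measurable_prodMk_add.aemeasurable
    (measurable_llr _ _).aestronglyMeasurable).trans ?_
  rw [integral_congr_ae hllr, integral_sub (h_noise_int.comp_snd P) h_out_int,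
    integral_fun_snd (fun x => llr Q (gaussianReal 0 σ2) x + log (gaussianPDFReal 0 σ2 x)),
    integral_add hQint (integrable_log_gaussianPDFReal hQ 0 hσ2),
    integral_log_gaussianPDFReal hQ hQmean hσ2,
    integral_log_gaussianPDFReal_add hτ hP hQ (by simp [m, hQmean]), hQvar]
  simp

theorem klDiv_channelLaw_prod_gaussianReal_le {E σ2 : ℝ≥0} (hσ2 : σ2 ≠ 0)
    (hP : MemLp (fun x => x) 2 P) (hPvar : Var[fun x => x; P] ≤ E)
    (hQ : MemLp (fun x => x) 2 Q) (hQmean : ∫ x, x ∂Q = 0) (hQvar : Var[fun x => x; Q] = σ2) :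
    InformationTheory.klDiv (channelLaw P Q) (P.prod (gaussianReal (∫ x, x ∂P) (E + σ2)))
      ≤ ENNReal.ofReal (log (1 + E / σ2) / 2) + InformationTheory.klDiv Q (gaussianReal 0 σ2) := by
  rcases eq_or_ne (InformationTheory.klDiv Q (gaussianReal 0 σ2)) ∞ with hfin | hfin
  · simp [hfin]
  obtain ⟨hQG, hQint⟩ := InformationTheory.klDiv_ne_top_iff.mp hfin
  have hτ : E + σ2 ≠ 0 := by simp [hσ2]
  have hd : 0 ≤ ∫ x, llr Q (gaussianReal 0 σ2) x ∂Q := by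
    simpa using InformationTheory.integral_llr_add_sub_measure_univ_nonneg hQG hQint
  have hcap : 0 ≤ log (1 + E / σ2) / 2 :=
    div_nonneg (log_nonneg (le_add_of_nonneg_right (by positivity))) zero_le_two
  rw [klDiv_channelLaw_prod_gaussianReal hσ2 hτ hP hQ hQmean hQvar hQG hQint,
    InformationTheory.klDiv_of_ac_of_integrable hQG hQint]
  simp only [probReal_univ, add_sub_cancel_right]
  rw [← ENNReal.ofReal_add hcap hd]
  refine ENNReal.ofReal_le_ofReal ?_
  have hσ2' : (0 : ℝ) < σ2 := by positivity
  have hlog : log (2 * π * (E + σ2)) - log (2 * π * σ2) = log (1 + E / σ2) := by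
    rw [← log_div (by positivity) (by positivity)]
    congr 1
    field_simp
    ring
  have hhalf : (Var[fun x => x; P] + σ2) / (2 * (E + σ2)) ≤ 1 / 2 := by
    rw [div_le_div_iff₀ (by positivity) (by positivity)]
    linarith
  have hσ2_half : (σ2 : ℝ) / (2 * σ2) = 1 / 2 := by field_simp
  push_cast
  rw [neg_div, neg_div, hσ2_half]
  linarith

end Channel

theorem stmt_9_general (E σ2 : ℝ≥0) (hσ2 : 0 < σ2)
    (Q : Measure ℝ) [IsProbabilityMeasure Q]
    (hQmean : ∫ x, x ∂Q = 0)
    (hQL2 : MemLp (fun x => x) 2 Q) (hQvar : variance (fun x => x) Q = (σ2 : ℝ)) :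
    sSup {r : EReal | ∃ P : Measure ℝ, IsProbabilityMeasure P ∧ P ≪ volume ∧
          MemLp (fun x => x) 2 P ∧ variance (fun x => x) P ≤ (E : ℝ) ∧
          r = rate P Q}
      ≤ ((Real.log (1 + (E : ℝ) / (σ2 : ℝ)) / 2 : ℝ) : EReal)
        + klDiv Q (gaussianReal 0 σ2) := by
  refine sSup_le ?_
  rintro _ ⟨P, hP, -, hP2, hPvar, rfl⟩
  have hcap : 0 ≤ log (1 + E / σ2) / 2 :=
    div_nonneg (log_nonneg (le_add_of_nonneg_right (by positivity))) zero_le_two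
  calc rate P Q
      = InformationTheory.klDiv (channelLaw P Q) (P.prod (channelLaw P Q).snd) :=
        rate_eq_klDiv_s9 P Q
    _ ≤ InformationTheory.klDiv (channelLaw P Q) (P.prod (gaussianReal (∫ x, x ∂P) (E + σ2))) :=
        EReal.coe_ennreal_le_coe_ennreal_iff.mpr (InformationTheory.klDiv_prod_snd_le _ _ _)
    _ ≤ (ENNReal.ofReal (log (1 + E / σ2) / 2) + InformationTheory.klDiv Q (gaussianReal 0 σ2) :
          ℝ≥0∞) :=
        EReal.coe_ennreal_le_coe_ennreal_iff.mpr
          (klDiv_channelLaw_prod_gaussianReal_le hσ2.ne' hP2 hPvar hQL2 hQmean hQvar)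
    _ = ((log (1 + E / σ2) / 2 : ℝ) : EReal) + klDiv Q (gaussianReal 0 σ2) := by
        rw [EReal.coe_ennreal_add, EReal.coe_ennreal_ofReal, max_eq_left hcap,
          klDiv_eq_coe_klDiv]

/-- The capacity of the additive-noise channel with zero-mean noise of
variance `σ2`, density and finite differential entropy, under input variance constraint
`E`, exceeds the Gaussian-equivalent capacity by at most the non-Gaussianity of the
noise: `C ≤ ½ log (1 + E/σ²) + D(P_N ‖ P_{N_G})`. -/
theorem stmt_9 (E σ2 : ℝ≥0) (hE : 0 < E) (hσ2 : 0 < σ2)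
    (Q : Measure ℝ) [IsProbabilityMeasure Q] (hQac : Q ≪ volume)
    (hQint : Integrable (fun x => x) Q) (hQmean : ∫ x, x ∂Q = 0)
    (hQL2 : MemLp (fun x => x) 2 Q) (hQvar : variance (fun x => x) Q = (σ2 : ℝ))
    (hQent : HasFiniteDiffEntropy Q) :
    sSup {r : EReal | ∃ P : Measure ℝ, IsProbabilityMeasure P ∧ P ≪ volume ∧
          MemLp (fun x => x) 2 P ∧ variance (fun x => x) P ≤ (E : ℝ) ∧
          r = rate P Q}
      ≤ ((Real.log (1 + (E : ℝ) / (σ2 : ℝ)) / 2 : ℝ) : EReal)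
        + klDiv Q (gaussianReal 0 σ2) :=
  stmt_9_general E σ2 hσ2 Q hQmean hQL2 hQvar
end
end
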